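/- There is a constant C > 0 such that for all t ≥ 1 and all k > 0, the first time derivative of the mode function satisfies |∂v/∂t(t,k)| ≤ C·t·ω(k)^{1/2}, where ω(k) = √(1+k²). -/

import Mathlib

/-!
Write `H = H^{(1)}_{iμ}` with `μ = modeMu m R`. Then `∂ₜv(t,k) = e^{-μπ/2} √t (3/2 H(kt) + kt H'(kt))`,
so it suffices that `|H(x)| ≤ C` and `x |H'(x)| ≤ C (1 + √x)` for `x > 0`, and since `H` is a fixed
combination of `J_{iμ}` and `J_{-iμ}`, that `J_{iμ}` obeys these bounds for every real `μ`.
For `x ≤ 1` they follow from the power series, whose coefficients decay like `1 / n!`.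
For `x ≥ 1`, `w = √x J` solves `w'' = -(1 + (μ² + 1/4) / x²) w`, along which
`(|w'|² + |w|²) e^{(μ² + 1/4) / x}` is nonincreasing; hence `J` and `J'` are `O(x^{-1/2})`.
-/

open Complex MeasureTheory Filter
open scoped RealInnerProductSpace

noncomputable section

/-- Three-dimensional Euclidean space. -/
abbrev V3 : Type := EuclideanSpace ℝ (Fin 3)

/-- The Bessel function of complex order `α`:
`J_α(x) = Σ_{n=0}^∞ ((−1)^n/(n!·Γ(α+n+1)))·exp((α+2n)·log(x/2))`. -/
def besselJ (α : ℂ) (x : ℝ) : ℂ :=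
  ∑' n : ℕ, ((-1 : ℂ) ^ n / ((n.factorial : ℂ) * Complex.Gamma (α + (n : ℂ) + 1))) *
    Complex.exp ((α + 2 * (n : ℂ)) * (Real.log (x / 2) : ℂ))

/-- The Hankel function of the first kind. -/
def hankel1 (α : ℂ) (x : ℝ) : ℂ :=
  (besselJ (-α) x - Complex.exp (-(Complex.I * (Real.pi : ℂ) * α)) * besselJ α x) /
    (Complex.I * Complex.sin (α * (Real.pi : ℂ)))

/-- The Hankel function of the second kind. -/
def hankel2 (α : ℂ) (x : ℝ) : ℂ :=
  (Complex.exp (Complex.I * (Real.pi : ℂ) * α) * besselJ α x - besselJ (-α) x) /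
    (Complex.I * Complex.sin (α * (Real.pi : ℂ)))

/-- `μ = √((mR)² − 9/4)`. -/
def modeMu (m R : ℝ) : ℝ := Real.sqrt ((m * R) ^ 2 - 9 / 4)

/-- `ν = iμ`. -/
def modeNu (m R : ℝ) : ℂ := Complex.I * (modeMu m R : ℂ)

/-- The mode function `v(t,k) = e^{−μπ/2}·t^{3/2}·H^{(1)}_ν(kt)`. -/
def modeV (m R t k : ℝ) : ℂ :=
  (Real.exp (-(modeMu m R * Real.pi / 2)) : ℂ) * ((t ^ ((3 : ℝ) / 2) : ℝ) : ℂ) *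
    hankel1 (modeNu m R) (k * t)

/-- `v′(t,k) = ∂v/∂t (t,k)`. -/
def modeV' (m R t k : ℝ) : ℂ := deriv (fun s => modeV m R s k) t

/-- `ω(k) = √(1+k²)`. -/
def omegaK (k : ℝ) : ℝ := Real.sqrt (1 + k ^ 2)

/-- The Fourier transform on `ℝ³`. -/
def ft (g : V3 → ℂ) (k : V3) : ℂ :=
  (((2 * Real.pi) ^ (-(3 : ℝ) / 2) : ℝ) : ℂ) *
    ∫ x : V3, Complex.exp (-(Complex.I) * (⟪k, x⟫ : ℂ)) * g x

/-- The inverse Fourier transform on `ℝ³`. -/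
def ift (g : V3 → ℂ) (x : V3) : ℂ :=
  (((2 * Real.pi) ^ (-(3 : ℝ) / 2) : ℝ) : ℂ) *
    ∫ k : V3, Complex.exp (Complex.I * (⟪k, x⟫ : ℂ)) * g k

/-- The map `K_t` on the Fourier side, applied to the Fourier transforms `f̃, h̃`
of the Cauchy data:
`K_t(f,h)(k) = (πi/(4t³))·[t·f̃(k)·conj(v′(t,|k|)) − R·h̃(k)·conj(v(t,|k|))]`. -/
def ktAux (m R t : ℝ) (ftil htil : V3 → ℂ) (k : V3) : ℂ :=
  ((Real.pi : ℂ) * Complex.I / (4 * (t : ℂ) ^ 3)) *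
    ((t : ℂ) * ftil k * (starRingEnd ℂ) (modeV' m R t ‖k‖) -
      (R : ℂ) * htil k * (starRingEnd ℂ) (modeV m R t ‖k‖))

/-- `K_t` applied to real Cauchy data `(f,h)`. -/
def ktFun (m R t : ℝ) (f h : V3 → ℝ) : V3 → ℂ :=
  ktAux m R t (ft fun x => (f x : ℂ)) (ft fun x => (h x : ℂ))

/-- The Fourier transform of the first component of the pair `L_tψ`:
`f̃_t(k) = v(t,|k|)·ψ(k) + conj(v(t,|k|))·conj(ψ(−k))`. -/
def ltF (m R t : ℝ) (ψ : V3 → ℂ) (k : V3) : ℂ :=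
  modeV m R t ‖k‖ * ψ k + (starRingEnd ℂ) (modeV m R t ‖k‖) * (starRingEnd ℂ) (ψ (-k))

/-- The Fourier transform of the second component of the pair `L_tψ`:
`h̃_t(k) = (t/R)·[v′(t,|k|)·ψ(k) + conj(v′(t,|k|))·conj(ψ(−k))]`. -/
def ltH (m R t : ℝ) (ψ : V3 → ℂ) (k : V3) : ℂ :=
  ((t / R : ℝ) : ℂ) *
    (modeV' m R t ‖k‖ * ψ k + (starRingEnd ℂ) (modeV' m R t ‖k‖) * (starRingEnd ℂ) (ψ (-k)))

/-- The solution `u(t,x⃗)` built from the coefficient function `ψ`: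
`u(t,x⃗) = (2π)^{−3/2}·∫ e^{ik⃗·x⃗}·[v(t,|k⃗|)·ψ(k⃗) + conj(v(t,|k⃗|))·conj(ψ(−k⃗))] dk⃗`. -/
def uSol (m R : ℝ) (ψ : V3 → ℂ) (t : ℝ) (x : V3) : ℂ :=
  (((2 * Real.pi) ^ (-(3 : ℝ) / 2) : ℝ) : ℂ) *
    ∫ k : V3, Complex.exp (Complex.I * (⟪k, x⟫ : ℂ)) *
      (modeV m R t ‖k‖ * ψ k + (starRingEnd ℂ) (modeV m R t ‖k‖) * (starRingEnd ℂ) (ψ (-k)))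

/-- The spatial Laplacian, as the sum of the second partial derivatives along
the coordinate directions. -/
def lap3 (w : V3 → ℂ) (x : V3) : ℂ :=
  ∑ i : Fin 3, iteratedDeriv 2 (fun s : ℝ => w (x + s • EuclideanSpace.single i (1 : ℝ))) 0

/-- The square of the Sobolev-type norm `‖(f,h)‖_{1/2}`, expressed in terms of the
Fourier transforms `f̃, h̃` of the data:
`‖(f,h)‖_{1/2}² = ∫ ω(|k⃗|)·|f̃(k⃗)|² dk⃗ + ∫ ω(|k⃗|)⁻¹·|h̃(k⃗)|² dk⃗`. -/
def halfNormSq (ftil htil : V3 → ℂ) : ℝ :=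
  (∫ k : V3, omegaK ‖k‖ * ‖ftil k‖ ^ 2) + ∫ k : V3, (omegaK ‖k‖)⁻¹ * ‖htil k‖ ^ 2

/-- The Sobolev-type norm `‖(f,h)‖_{1/2}` (arguments are the Fourier transforms). -/
def halfNorm (ftil htil : V3 → ℂ) : ℝ := Real.sqrt (halfNormSq ftil htil)

/-- The `L²(ℝ³)` norm. -/
def l2Norm (g : V3 → ℂ) : ℝ := Real.sqrt (∫ k : V3, ‖g k‖ ^ 2)

/-- The transformed potential operator `V̂` with (Fourier-transformed) potential `W`:
`(V̂ψ)(k⃗) = −(2π)^{3/2}·R·(πi/4)·conj(v(1,|k⃗|))·(W ∗ g_ψ)(k⃗)` where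
`g_ψ(k⃗) = v(1,|k⃗|)·ψ(k⃗) + conj(v(1,|k⃗|))·conj(ψ(−k⃗))`. -/
def vHatOp (m R : ℝ) (W : V3 → ℂ) (ψ : V3 → ℂ) (k : V3) : ℂ :=
  ((-((2 * Real.pi) ^ ((3 : ℝ) / 2)) * R : ℝ) : ℂ) * ((Real.pi : ℂ) * Complex.I / 4) *
    (starRingEnd ℂ) (modeV m R 1 ‖k‖) * ∫ y : V3, W y * ltF m R 1 ψ (k - y)

/-- The free transformed evolution `Û₀(a,b) = K₁ ∘ L_a ∘ K_b ∘ L₁` on `L²(ℝ³)`. -/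
def u0Hat (m R a b : ℝ) (ψ : V3 → ℂ) : V3 → ℂ :=
  ktAux m R 1 (ltF m R a (ktAux m R b (ltF m R 1 ψ) (ltH m R 1 ψ)))
    (ltH m R a (ktAux m R b (ltF m R 1 ψ) (ltH m R 1 ψ)))

/-- The inner chain `V̂(s)·V̂(s₂)···V̂(s_{j+1})·Û₀(s_{j+1},1)ψ` of the `n`-th Dyson term,
with the nested integrals `∫₁^{s}···` built in; `W s` is the spatial Fourier transform
of the potential at time `s`. -/
def dysonM (m R : ℝ) (W : ℝ → V3 → ℂ) : ℕ → ℝ → (V3 → ℂ) → V3 → ℂ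
  | 0, s, ψ => vHatOp m R (W s) (u0Hat m R s 1 ψ)
  | j + 1, s, ψ => vHatOp m R (W s) fun k => ∫ r in Set.Ioc (1 : ℝ) s, dysonM m R W j r ψ k

/-- The `n`-th Dyson term
`∫₁^t∫₁^{s₁}···∫₁^{s_{n−1}} Û₀(t,s₁)·V̂(s₁)···V̂(s_n)·Û₀(s_n,1)ψ ds_n···ds₁` (for `n ≥ 1`). -/
def dysonT (m R : ℝ) (W : ℝ → V3 → ℂ) (n : ℕ) (t : ℝ) (ψ : V3 → ℂ) : V3 → ℂ := fun k =>
  ∫ s in Set.Ioc (1 : ℝ) t, u0Hat m R t s (dysonM m R W (n - 1) s ψ) k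

/-- `(y / 2) ^ b` for `y > 0`, in the form used by `besselJ`. -/
def halfPow (b : ℂ) (y : ℝ) : ℂ := Complex.exp (b * (Real.log (y / 2) : ℂ))

lemma halfPow_add_natCast (b : ℂ) (n : ℕ) {y : ℝ} (hy : 0 < y) :
    halfPow (b + n) y = ((y / 2 : ℝ) : ℂ) ^ n * halfPow b y := by
  rw [halfPow, halfPow, add_mul, Complex.exp_add, Complex.exp_nat_mul, ← Complex.ofReal_exp,
    Real.exp_log (by positivity), mul_comm]

lemma halfPow_add_two_mul (b : ℂ) (n : ℕ) {y : ℝ} (hy : 0 < y) :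
    halfPow (b + 2 * n) y = (((y / 2) ^ 2) ^ n : ℝ) * halfPow b y := by
  have h := halfPow_add_natCast b (2 * n) hy
  push_cast at h ⊢
  rw [h, pow_mul]

lemma norm_mul_halfPow_add_two_mul (a : ℂ) (β : ℂ) (n : ℕ) {y : ℝ} (hy : 0 < y) :
    ‖a * halfPow (β + 2 * n) y‖ = ‖a‖ * ((y / 2) ^ 2) ^ n * ‖halfPow β y‖ := by
  rw [halfPow_add_two_mul β n hy, norm_mul, norm_mul, Complex.norm_real,
    Real.norm_of_nonneg (by positivity), mul_assoc]

lemma ofReal_mul_halfPow_sub_one (b : ℂ) {y : ℝ} (hy : 0 < y) :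
    (y : ℂ) * halfPow (b - 1) y = 2 * halfPow b y := by
  have h := halfPow_add_natCast (b - 1) 1 hy
  rw [Nat.cast_one, sub_add_cancel, pow_one] at h
  rw [h]
  push_cast
  ring

lemma norm_halfPow_of_re_eq_zero {b : ℂ} (hb : b.re = 0) (y : ℝ) : ‖halfPow b y‖ = 1 := by
  simp [halfPow, Complex.norm_exp, hb]

lemma hasDerivAt_halfPow (b : ℂ) {y : ℝ} (hy : 0 < y) :
    HasDerivAt (halfPow b) (b / 2 * halfPow (b - 1) y) y := by
  have hlog : HasDerivAt (fun z : ℝ => Real.log (z / 2)) y⁻¹ y := by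
    refine (((hasDerivAt_id' y).div_const 2).log (by positivity)).congr_deriv ?_
    field_simp
  refine (hlog.ofReal_comp.const_mul b).cexp.congr_deriv ?_
  change halfPow b y * _ = _
  have hy' : (y : ℂ) ≠ 0 := by exact_mod_cast hy.ne'
  have h := ofReal_mul_halfPow_sub_one b hy
  push_cast
  field_simp
  linear_combination -b * h

def halfPowSeries (c : ℕ → ℂ) (β : ℂ) (y : ℝ) : ℂ := ∑' n : ℕ, c n * halfPow (β + 2 * n) y

def derivCoeff (c : ℕ → ℂ) (β : ℂ) (n : ℕ) : ℂ := (β + 2 * n) / 2 * c n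

def HasInfiniteRadius (c : ℕ → ℂ) : Prop := ∀ Q : ℝ, 0 ≤ Q → Summable fun n => ‖c n‖ * Q ^ n

section HalfPowSeries

variable {c : ℕ → ℂ} {β : ℂ}

lemma HasInfiniteRadius.derivCoeff (hc : HasInfiniteRadius c) (β : ℂ) :
    HasInfiniteRadius (derivCoeff c β) := by
  intro Q hQ
  refine ((hc (2 * Q) (by positivity)).mul_left (‖β‖ + 1)).of_nonneg_of_le
    (fun n => by positivity) fun n => ?_
  have hn : (n : ℝ) + 1 ≤ 2 ^ n := by exact_mod_cast Nat.lt_two_pow_self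
  have hβn : ‖β + 2 * n‖ / 2 ≤ (‖β‖ + 1) * 2 ^ n := by
    have := norm_add_le β (2 * n)
    simp only [norm_mul, Complex.norm_ofNat, Complex.norm_natCast] at this
    nlinarith [norm_nonneg β]
  calc ‖_root_.derivCoeff c β n‖ * Q ^ n = ‖β + 2 * n‖ / 2 * (‖c n‖ * Q ^ n) := by
        simp only [_root_.derivCoeff, norm_mul, norm_div, Complex.norm_ofNat]; ring
    _ ≤ (‖β‖ + 1) * 2 ^ n * (‖c n‖ * Q ^ n) := by gcongr
    _ = (‖β‖ + 1) * (‖c n‖ * (2 * Q) ^ n) := by ring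

lemma summable_halfPowSeries (hc : HasInfiniteRadius c) {y : ℝ} (hy : 0 < y) :
    Summable fun n => c n * halfPow (β + 2 * n) y := by
  refine Summable.of_norm ?_
  simp_rw [norm_mul_halfPow_add_two_mul _ β _ hy]
  exact (hc _ (by positivity)).mul_right _

lemma hasDerivAt_halfPowSeries (hc : HasInfiniteRadius c) {x : ℝ} (hx : 0 < x) :
    HasDerivAt (halfPowSeries c β) (halfPowSeries (derivCoeff c β) (β - 1) x) x := by
  have hcont : ContinuousOn (halfPow (β - 1)) (Set.Icc (x / 2) (2 * x)) := fun y hy =>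
    (hasDerivAt_halfPow _ (by linarith [hy.1])).continuousAt.continuousWithinAt
  obtain ⟨K, hK⟩ := isCompact_Icc.exists_bound_of_continuousOn hcont
  have hu := ((hc.derivCoeff β) _ (sq_nonneg x)).mul_right K
  have hmem : x ∈ Set.Ioo (x / 2) (2 * x) := ⟨by linarith, by linarith⟩
  show HasDerivAt (fun y => ∑' n : ℕ, c n * halfPow (β + 2 * n) y)
    (∑' n : ℕ, derivCoeff c β n * halfPow (β - 1 + 2 * n) x) x
  refine hasDerivAt_tsum_of_isPreconnected (g := fun n y => c n * halfPow (β + 2 * n) y)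
    (g' := fun n y => derivCoeff c β n * halfPow (β - 1 + 2 * n) y) hu isOpen_Ioo isPreconnected_Ioo
    (fun n y hy => ?_) (fun n y hy => ?_) hmem (summable_halfPowSeries hc hx) hmem
  · have hy0 : 0 < y := by linarith [hy.1]
    have h := (hasDerivAt_halfPow (β + 2 * n) hy0).const_mul (c n)
    refine h.congr_deriv ?_
    simp only [derivCoeff]
    ring_nf
  · have hy0 : 0 < y := by linarith [hy.1]
    rw [norm_mul_halfPow_add_two_mul _ _ _ hy0]
    have hyx : ((y / 2) ^ 2) ^ n ≤ (x ^ 2) ^ n := by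
      gcongr
      linarith [hy.2]
    gcongr
    exact hK y (Set.Ioo_subset_Icc_self hy)

lemma norm_halfPowSeries_le (hc : Summable fun n => ‖c n‖) {y : ℝ} (hy : 0 < y) (hy2 : y ≤ 2) :
    ‖halfPowSeries c β y‖ ≤ (∑' n, ‖c n‖) * ‖halfPow β y‖ := by
  have hle : ∀ n, ‖c n * halfPow (β + 2 * n) y‖ ≤ ‖c n‖ * ‖halfPow β y‖ := fun n => by
    rw [norm_mul_halfPow_add_two_mul _ _ _ hy]
    have : ((y / 2) ^ 2) ^ n ≤ 1 := pow_le_one₀ (by positivity) (by nlinarith)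
    gcongr
    exact mul_le_of_le_one_right (norm_nonneg _) this
  have hs := hc.mul_right ‖halfPow β y‖
  calc ‖halfPowSeries c β y‖ ≤ ∑' n, ‖c n * halfPow (β + 2 * n) y‖ :=
        norm_tsum_le_tsum_norm (hs.of_nonneg_of_le (fun _ => norm_nonneg _) hle)
    _ ≤ ∑' n, ‖c n‖ * ‖halfPow β y‖ :=
        (hs.of_nonneg_of_le (fun _ => norm_nonneg _) hle).tsum_le_tsum hle hs
    _ = (∑' n, ‖c n‖) * ‖halfPow β y‖ := tsum_mul_right

end HalfPowSeries

def besselCoeff (α : ℂ) (n : ℕ) : ℂ := (-1) ^ n / (n.factorial * Complex.Gamma (α + n + 1))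

lemma besselJ_eq_halfPowSeries (α : ℂ) : besselJ α = halfPowSeries (besselCoeff α) α := rfl

def besselJ' (α : ℂ) : ℝ → ℂ := halfPowSeries (derivCoeff (besselCoeff α) α) (α - 1)

def besselJ'' (α : ℂ) : ℝ → ℂ :=
  halfPowSeries (derivCoeff (derivCoeff (besselCoeff α) α) (α - 1)) (α - 1 - 1)

section BesselCoeff

variable {α : ℂ}

lemma add_natCast_add_one_ne_zero_of_re_nonneg (hα : 0 ≤ α.re) (n : ℕ) : α + n + 1 ≠ 0 :=
  fun h => by
    have := congrArg Complex.re h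
    simp at this
    linarith

lemma norm_Gamma_add_one_le (hα : 0 ≤ α.re) (n : ℕ) :
    ‖Complex.Gamma (α + 1)‖ ≤ ‖Complex.Gamma (α + n + 1)‖ := by
  induction n with
  | zero => simp
  | succ n ih =>
    have h1 : 1 ≤ ‖α + n + 1‖ := le_trans (by simp; linarith) (Complex.re_le_norm _)
    rw [Nat.cast_succ, show α + (n + 1) + 1 = α + n + 1 + 1 by ring,
      Complex.Gamma_add_one _ (add_natCast_add_one_ne_zero_of_re_nonneg hα n), norm_mul]
    nlinarith [norm_nonneg (Complex.Gamma (α + n + 1))]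

lemma hasInfiniteRadius_besselCoeff (hα : 0 ≤ α.re) : HasInfiniteRadius (besselCoeff α) := by
  intro Q hQ
  have hΓ : 0 < ‖Complex.Gamma (α + 1)‖ :=
    norm_pos_iff.2 (Complex.Gamma_ne_zero_of_re_pos (by simp; linarith))
  refine ((Real.summable_pow_div_factorial Q).mul_left ‖Complex.Gamma (α + 1)‖⁻¹).of_nonneg_of_le
    (fun n => by positivity) fun n => ?_
  have hcoeff : ‖besselCoeff α n‖ ≤ ‖Complex.Gamma (α + 1)‖⁻¹ / n.factorial := by
    rw [besselCoeff, norm_div, norm_mul, norm_pow, norm_neg, norm_one, one_pow,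
      Complex.norm_natCast, one_div, mul_inv, mul_comm, ← div_eq_mul_inv]
    gcongr
    exact norm_Gamma_add_one_le hα n
  calc ‖besselCoeff α n‖ * Q ^ n ≤ ‖Complex.Gamma (α + 1)‖⁻¹ / n.factorial * Q ^ n := by gcongr
    _ = _ := by ring

lemma besselCoeff_succ (hα : 0 ≤ α.re) (n : ℕ) :
    (n + 1) * (α + n + 1) * besselCoeff α (n + 1) = -besselCoeff α n := by
  have hΓ : Complex.Gamma (α + n + 1) ≠ 0 :=
    Complex.Gamma_ne_zero_of_re_pos (by simp; linarith)
  have hn : (n : ℂ) + 1 ≠ 0 := by exact_mod_cast n.succ_ne_zero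
  have hfac : (n.factorial : ℂ) ≠ 0 := by exact_mod_cast n.factorial_ne_zero
  have hαn := add_natCast_add_one_ne_zero_of_re_nonneg hα n
  rw [besselCoeff, besselCoeff, Nat.factorial_succ, Nat.cast_succ,
    show α + (n + 1) + 1 = α + n + 1 + 1 by ring,
    Complex.Gamma_add_one _ hαn]
  push_cast
  field_simp
  ring

end BesselCoeff

section BesselEquation

variable {α : ℂ}

lemma hasDerivAt_besselJ (hα : 0 ≤ α.re) {x : ℝ} (hx : 0 < x) :
    HasDerivAt (besselJ α) (besselJ' α x) x :=
  hasDerivAt_halfPowSeries (hasInfiniteRadius_besselCoeff hα) hx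

lemma hasDerivAt_besselJ' (hα : 0 ≤ α.re) {x : ℝ} (hx : 0 < x) :
    HasDerivAt (besselJ' α) (besselJ'' α x) x :=
  hasDerivAt_halfPowSeries ((hasInfiniteRadius_besselCoeff hα).derivCoeff α) hx

lemma bessel_operator_term {x : ℝ} (hx : 0 < x) (n : ℕ) :
    (x : ℂ) ^ 2 * (derivCoeff (derivCoeff (besselCoeff α) α) (α - 1) n *
      halfPow (α - 1 - 1 + 2 * n) x) + x * (derivCoeff (besselCoeff α) α n *
      halfPow (α - 1 + 2 * n) x) - α ^ 2 * (besselCoeff α n * halfPow (α + 2 * n) x) =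
      4 * n * (α + n) * (besselCoeff α n * halfPow (α + 2 * n) x) := by
  have h1 := ofReal_mul_halfPow_sub_one (α + 2 * n) hx
  have h2 := ofReal_mul_halfPow_sub_one (α + 2 * n - 1) hx
  rw [show α - 1 - 1 + 2 * n = α + 2 * n - 1 - 1 by ring,
    show α - 1 + 2 * n = α + 2 * n - 1 by ring]
  simp only [derivCoeff]
  linear_combination (α + 2 * n) * besselCoeff α n *
    ((α + 2 * n - 1) / 4 * x * h2 + (α + 2 * n) / 2 * h1)

lemma sq_mul_besselJ_term (hα : 0 ≤ α.re) {x : ℝ} (hx : 0 < x) (n : ℕ) :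
    (x : ℂ) ^ 2 * (besselCoeff α n * halfPow (α + 2 * n) x) =
      -(4 * (n + 1 : ℕ) * (α + (n + 1 : ℕ)) *
        (besselCoeff α (n + 1) * halfPow (α + 2 * (n + 1 : ℕ)) x)) := by
  have h := halfPow_add_natCast (α + 2 * n) 2 hx
  push_cast at h ⊢
  rw [show α + 2 * (n + 1) = α + 2 * n + 2 by ring, h]
  linear_combination (4 * ((x : ℂ) / 2) ^ 2 * halfPow (α + 2 * n) x) * besselCoeff_succ hα n

/-- `x² J` is the series of `bessel_operator_term` shifted by one index, with the opposite sign. -/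
theorem besselJ_ode (hα : 0 ≤ α.re) {x : ℝ} (hx : 0 < x) :
    (x : ℂ) ^ 2 * besselJ'' α x + x * besselJ' α x + ((x : ℂ) ^ 2 - α ^ 2) * besselJ α x = 0 := by
  have hc := hasInfiniteRadius_besselCoeff hα
  have hs0 := summable_halfPowSeries (β := α) hc hx
  have hs1 := summable_halfPowSeries (β := α - 1) (hc.derivCoeff α) hx
  have hs2 := summable_halfPowSeries (β := α - 1 - 1) ((hc.derivCoeff α).derivCoeff (α - 1)) hx
  set g : ℕ → ℂ := fun n => 4 * n * (α + n) * (besselCoeff α n * halfPow (α + 2 * n) x)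
  have hg : Summable g := (((hs2.mul_left _).add (hs1.mul_left _)).sub (hs0.mul_left _)).congr
    (bessel_operator_term hx)
  have hsum : (x : ℂ) ^ 2 * besselJ'' α x + x * besselJ' α x - α ^ 2 * besselJ α x = ∑' n, g n := by
    rw [besselJ'', besselJ', besselJ_eq_halfPowSeries, halfPowSeries, halfPowSeries, halfPowSeries,
      ← tsum_mul_left, ← tsum_mul_left, ← tsum_mul_left,
      ← (hs2.mul_left _).tsum_add (hs1.mul_left _),
      ← ((hs2.mul_left _).add (hs1.mul_left _)).tsum_sub (hs0.mul_left _)]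
    exact tsum_congr (bessel_operator_term hx)
  have hshift : (x : ℂ) ^ 2 * besselJ α x = -∑' n, g (n + 1) := by
    rw [besselJ_eq_halfPowSeries, halfPowSeries, ← tsum_mul_left, ← tsum_neg]
    exact tsum_congr (sq_mul_besselJ_term hα hx)
  rw [hg.tsum_eq_zero_add] at hsum
  simp only [g, Nat.cast_zero, mul_zero, zero_mul, zero_add] at hsum
  linear_combination hsum + hshift

end BesselEquation

/-- For `w'' = -(1 + c / x²) w` with `c ≥ 0`, the energy `‖w'‖² + ‖w‖²` may grow, but
`(‖w'‖² + ‖w‖²) · exp (c / x)` does not. -/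
theorem oscillator_energy_le {E : Type*} [NormedAddCommGroup E] [InnerProductSpace ℝ E]
    {w v : ℝ → E} {c x₀ : ℝ} (hx₀ : 0 < x₀) (hc : 0 ≤ c)
    (hw : ∀ x, x₀ ≤ x → HasDerivAt w (v x) x)
    (hv : ∀ x, x₀ ≤ x → HasDerivAt v (-((1 + c / x ^ 2) • w x)) x) {x : ℝ} (hx : x₀ ≤ x) :
    ‖v x‖ ^ 2 + ‖w x‖ ^ 2 ≤ (‖v x₀‖ ^ 2 + ‖w x₀‖ ^ 2) * Real.exp (c / x₀) := by
  set G : ℝ → ℝ := fun y => (‖v y‖ ^ 2 + ‖w y‖ ^ 2) * Real.exp (c / y)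
  have hG' : ∀ y, x₀ ≤ y → HasDerivAt G (Real.exp (c / y) * (c / y ^ 2) *
      (-(2 * inner ℝ (v y) (w y)) - (‖v y‖ ^ 2 + ‖w y‖ ^ 2))) y := by
    intro y hy
    have hy0 : y ≠ 0 := by linarith
    refine (((hv y hy).norm_sq.add (hw y hy).norm_sq).mul
      ((hasDerivAt_inv hy0).const_mul c).exp).congr_deriv ?_
    rw [inner_neg_right, real_inner_smul_right, real_inner_comm (w y), Pi.add_apply]
    field_simp
    ring
  have hG'_nonpos : ∀ y, x₀ ≤ y → Real.exp (c / y) * (c / y ^ 2) *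
      (-(2 * inner ℝ (v y) (w y)) - (‖v y‖ ^ 2 + ‖w y‖ ^ 2)) ≤ 0 := by
    intro y hy
    have hvw : -inner ℝ (v y) (w y) ≤ ‖v y‖ * ‖w y‖ :=
      (neg_le_abs _).trans (abs_real_inner_le_norm _ _)
    refine mul_nonpos_of_nonneg_of_nonpos (by positivity) ?_
    nlinarith [sq_nonneg (‖v y‖ - ‖w y‖)]
  have hanti : AntitoneOn G (Set.Ici x₀) := by
    refine antitoneOn_of_deriv_nonpos (convex_Ici x₀)
      (fun y hy => (hG' y hy).continuousAt.continuousWithinAt)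
      (fun y hy => ?_) fun y hy => ?_
    · rw [interior_Ici] at hy
      exact (hG' y (le_of_lt hy)).differentiableAt.differentiableWithinAt
    · rw [interior_Ici] at hy
      rw [(hG' y (le_of_lt hy)).deriv]
      exact hG'_nonpos y (le_of_lt hy)
  calc ‖v x‖ ^ 2 + ‖w x‖ ^ 2 ≤ G x :=
        le_mul_of_one_le_right (by positivity)
          (Real.one_le_exp_iff.2 (div_nonneg hc (by linarith)))
    _ ≤ G x₀ := hanti (Set.mem_Ici.2 le_rfl) hx hx

/-- The function differentiated is `w'` for `w = √x · J`, so this is Bessel's equation of order `iμ`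
in Liouville normal form `w'' = -(1 + (μ² + 1/4) / x²) w`. -/
lemma hasDerivAt_liouville_of_bessel_ode {J J' J'' : ℝ → ℂ} {μ x : ℝ} (hx : 0 < x)
    (hJ : HasDerivAt J (J' x) x) (hJ' : HasDerivAt J' (J'' x) x)
    (hode : (x : ℂ) ^ 2 * J'' x + x * J' x + ((x : ℂ) ^ 2 + (μ : ℂ) ^ 2) * J x = 0) :
    HasDerivAt (fun y => (√y : ℂ) * J' y + J y / (2 * √y))
      (-((1 + (μ ^ 2 + 1 / 4) / x ^ 2) • ((√x : ℂ) * J x))) x := by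
  have hsqrt := (Real.hasDerivAt_sqrt hx.ne').ofReal_comp
  have hs : (√x : ℂ) ≠ 0 := by exact_mod_cast (Real.sqrt_pos.2 hx).ne'
  have hxs : (x : ℂ) = (√x : ℂ) ^ 2 := by exact_mod_cast (Real.sq_sqrt hx.le).symm
  refine ((hsqrt.mul hJ').add (hJ.div (hsqrt.const_mul 2) (by simpa using hs))).congr_deriv ?_
  rw [hxs] at hode
  simp only [Complex.real_smul]
  push_cast
  rw [hxs]
  field_simp
  linear_combination 16 * hode

theorem exists_sqrt_mul_norm_le_of_bessel_ode {J J' J'' : ℝ → ℂ} {μ : ℝ}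
    (hJ : ∀ x, 0 < x → HasDerivAt J (J' x) x) (hJ' : ∀ x, 0 < x → HasDerivAt J' (J'' x) x)
    (hode : ∀ x : ℝ, 0 < x →
      (x : ℂ) ^ 2 * J'' x + x * J' x + ((x : ℂ) ^ 2 + (μ : ℂ) ^ 2) * J x = 0) :
    ∃ A, ∀ x : ℝ, 1 ≤ x → √x * ‖J x‖ ≤ A ∧ √x * ‖J' x‖ ≤ A := by
  set w : ℝ → ℂ := fun x => (√x : ℂ) * J x
  set v : ℝ → ℂ := fun x => (√x : ℂ) * J' x + J x / (2 * √x)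
  have hw : ∀ x, 1 ≤ x → HasDerivAt w (v x) x := fun x hx => by
    refine ((Real.hasDerivAt_sqrt (by positivity)).ofReal_comp.mul
      (hJ x (by linarith))).congr_deriv ?_
    push_cast
    ring
  have hv : ∀ x, 1 ≤ x → HasDerivAt v (-((1 + (μ ^ 2 + 1 / 4) / x ^ 2) • w x)) x :=
    fun x hx => hasDerivAt_liouville_of_bessel_ode (by linarith) (hJ x (by linarith))
      (hJ' x (by linarith)) (hode x (by linarith))
  set A := √((‖v 1‖ ^ 2 + ‖w 1‖ ^ 2) * Real.exp ((μ ^ 2 + 1 / 4) / 1))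
  refine ⟨2 * A, fun x hx => ?_⟩
  have hsx : 1 ≤ √x := Real.one_le_sqrt.2 hx
  have hE := oscillator_energy_le one_pos (by positivity) hw hv hx
  have hwA : ‖w x‖ ≤ A := Real.le_sqrt_of_sq_le (by nlinarith [sq_nonneg ‖v x‖])
  have hvA : ‖v x‖ ≤ A := Real.le_sqrt_of_sq_le (by nlinarith [sq_nonneg ‖w x‖])
  have hwJ : ‖w x‖ = √x * ‖J x‖ := by
    simp only [w, norm_mul, Complex.norm_real, Real.norm_of_nonneg (Real.sqrt_nonneg x)]
  have hJ'v : √x * ‖J' x‖ ≤ ‖v x‖ + ‖J x‖ / (2 * √x) := by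
    have : (√x : ℂ) * J' x = v x - J x / (2 * √x) := by simp only [v]; ring
    calc √x * ‖J' x‖ = ‖v x - J x / (2 * √x)‖ := by
          rw [← this, norm_mul, Complex.norm_real, Real.norm_of_nonneg (Real.sqrt_nonneg x)]
      _ ≤ ‖v x‖ + ‖J x / (2 * √x)‖ := norm_sub_le _ _
      _ = ‖v x‖ + ‖J x‖ / (2 * √x) := by
          rw [norm_div, norm_mul, Complex.norm_real, Complex.norm_ofNat,
            Real.norm_of_nonneg (Real.sqrt_nonneg x)]
  have hA : 0 ≤ A := Real.sqrt_nonneg _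
  have hJA : ‖J x‖ / (2 * √x) ≤ A := by
    rw [div_le_iff₀ (by positivity)]
    nlinarith [mul_le_mul_of_nonneg_right hsx (norm_nonneg (J x))]
  constructor <;> linarith

theorem exists_norm_besselJ_le (μ : ℝ) : ∃ C, ∀ x : ℝ, 0 < x →
    ‖besselJ (I * μ) x‖ ≤ C ∧ x * ‖deriv (besselJ (I * μ)) x‖ ≤ C * (1 + √x) := by
  set α : ℂ := I * μ
  have hα : 0 ≤ α.re := by simp [α]
  have hc0 := hasInfiniteRadius_besselCoeff hα 1 zero_le_one
  have hc1 := (hasInfiniteRadius_besselCoeff hα).derivCoeff α 1 zero_le_one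
  simp only [one_pow, mul_one] at hc0 hc1
  obtain ⟨A, hA⟩ := exists_sqrt_mul_norm_le_of_bessel_ode (μ := μ)
    (fun x hx => hasDerivAt_besselJ hα hx)
    (fun x hx => hasDerivAt_besselJ' hα hx) fun x hx => by
      have h := besselJ_ode hα hx
      rw [show α ^ 2 = -(μ : ℂ) ^ 2 by simp [α, mul_pow]] at h
      linear_combination h
  set B₀ := ∑' n, ‖besselCoeff α n‖
  set B₁ := ∑' n, ‖derivCoeff (besselCoeff α) α n‖
  have hB₀ : 0 ≤ B₀ := tsum_nonneg fun _ => norm_nonneg _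
  have hB₁ : 0 ≤ B₁ := tsum_nonneg fun _ => norm_nonneg _
  have hA0 : 0 ≤ A := le_trans (by positivity) (hA 1 le_rfl).1
  refine ⟨B₀ + 2 * B₁ + A, fun x hx => ?_⟩
  rw [(hasDerivAt_besselJ hα hx).deriv]
  have hsx : 0 ≤ √x := Real.sqrt_nonneg x
  rcases le_total x 1 with hx1 | hx1
  · have hH : ‖halfPow α x‖ = 1 := norm_halfPow_of_re_eq_zero (by simp [α]) x
    have hH' : x * ‖halfPow (α - 1) x‖ = 2 := by
      have h := congrArg norm (ofReal_mul_halfPow_sub_one α hx)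
      rwa [norm_mul, norm_mul, hH, Complex.norm_real, Real.norm_of_nonneg hx.le,
        Complex.norm_ofNat, mul_one] at h
    have hJ := norm_halfPowSeries_le (β := α) hc0 hx (by linarith)
    have hJ' := norm_halfPowSeries_le (β := α - 1) hc1 hx (by linarith)
    rw [hH, mul_one] at hJ
    rw [besselJ_eq_halfPowSeries]
    constructor
    · linarith
    · calc x * ‖besselJ' α x‖ ≤ B₁ * (x * ‖halfPow (α - 1) x‖) := by
            rw [besselJ']; nlinarith
        _ ≤ (B₀ + 2 * B₁ + A) * (1 + √x) := by nlinarith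
  · have hsx1 : 1 ≤ √x := Real.one_le_sqrt.2 hx1
    obtain ⟨hJ, hJ'⟩ := hA x hx1
    constructor
    · nlinarith [norm_nonneg (besselJ α x)]
    · calc x * ‖besselJ' α x‖ = √x * (√x * ‖besselJ' α x‖) := by
            rw [← mul_assoc, Real.mul_self_sqrt hx.le]
        _ ≤ (B₀ + 2 * B₁ + A) * (1 + √x) := by nlinarith

lemma hasDerivAt_hankel1 {α : ℂ} (hα : α.re = 0) {x : ℝ} (hx : 0 < x) :
    HasDerivAt (hankel1 α) ((deriv (besselJ (-α)) x - Complex.exp (-(I * Real.pi * α)) *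
      deriv (besselJ α) x) / (I * Complex.sin (α * Real.pi))) x := by
  have hJ := hasDerivAt_besselJ hα.ge hx
  have hJneg := hasDerivAt_besselJ (α := -α) (by simp [hα]) hx
  rw [hJ.deriv, hJneg.deriv]
  exact (hJneg.sub (hJ.const_mul _)).div_const _

theorem exists_norm_hankel1_le (μ : ℝ) : ∃ C, ∀ x : ℝ, 0 < x →
    ‖hankel1 (I * μ) x‖ ≤ C ∧ x * ‖deriv (hankel1 (I * μ)) x‖ ≤ C * (1 + √x) := by
  obtain ⟨C₁, hC₁⟩ := exists_norm_besselJ_le μ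
  obtain ⟨C₂, hC₂⟩ := exists_norm_besselJ_le (-μ)
  rw [show I * ((-μ : ℝ) : ℂ) = -(I * μ) by push_cast; ring] at hC₂
  set e := Complex.exp (-(I * Real.pi * (I * μ)))
  set d := I * Complex.sin (I * μ * Real.pi)
  have hcomb : ∀ a b : ℂ, ‖(a - e * b) / d‖ ≤ (‖a‖ + ‖e‖ * ‖b‖) / ‖d‖ := fun a b => by
    rw [norm_div, ← norm_mul]
    exact div_le_div_of_nonneg_right (norm_sub_le _ _) (norm_nonneg _)
  refine ⟨(C₂ + ‖e‖ * C₁) / ‖d‖, fun x hx => ⟨?_, ?_⟩⟩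
  · refine (hcomb _ _).trans (div_le_div_of_nonneg_right ?_ (norm_nonneg _))
    gcongr
    · exact (hC₂ x hx).1
    · exact (hC₁ x hx).1
  · rw [(hasDerivAt_hankel1 (by simp) hx).deriv]
    calc x * ‖(deriv (besselJ (-(I * μ))) x - e * deriv (besselJ (I * μ)) x) / d‖
        ≤ (x * ‖deriv (besselJ (-(I * μ))) x‖ + ‖e‖ * (x * ‖deriv (besselJ (I * μ)) x‖)) / ‖d‖ := by
          rw [mul_left_comm, ← mul_add, mul_div_assoc]
          exact mul_le_mul_of_nonneg_left (hcomb _ _) hx.le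
      _ ≤ (C₂ * (1 + √x) + ‖e‖ * (C₁ * (1 + √x))) / ‖d‖ := by
          refine div_le_div_of_nonneg_right (add_le_add (hC₂ x hx).2 ?_) (norm_nonneg _)
          exact mul_le_mul_of_nonneg_left (hC₁ x hx).2 (norm_nonneg e)
      _ = (C₂ + ‖e‖ * C₁) / ‖d‖ * (1 + √x) := by ring

lemma modeV'_eq (m R : ℝ) {t : ℝ} (ht : 0 < t) (k : ℝ)
    (hH : DifferentiableAt ℝ (hankel1 (modeNu m R)) (k * t)) :
    modeV' m R t k = (Real.exp (-(modeMu m R * Real.pi / 2)) * √t : ℝ) *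
      (3 / 2 * hankel1 (modeNu m R) (k * t) +
        (k * t : ℝ) * deriv (hankel1 (modeNu m R)) (k * t)) := by
  have hpow := (Real.hasDerivAt_rpow_const (p := 3 / 2) (Or.inl ht.ne')).ofReal_comp
  have hcomp := hH.hasDerivAt.scomp t ((hasDerivAt_id' t).const_mul k)
  refine (((hpow.const_mul (Real.exp (-(modeMu m R * Real.pi / 2)) : ℂ)).mul hcomp).deriv).trans ?_
  have h12 : t ^ ((3 : ℝ) / 2 - 1) = √t := by
    rw [Real.sqrt_eq_rpow]; norm_num
  have h32 : t ^ ((3 : ℝ) / 2) = t * √t := by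
    rw [show (3 : ℝ) / 2 = 1 + 1 / 2 by norm_num, Real.rpow_add ht, Real.rpow_one,
      Real.sqrt_eq_rpow]
  simp only [h12, h32, mul_one, Function.comp_def, real_smul]
  push_cast
  ring

lemma one_le_omegaK_rpow (k : ℝ) : 1 ≤ omegaK k ^ ((1 : ℝ) / 2) :=
  Real.one_le_rpow (Real.one_le_sqrt.2 (by nlinarith)) (by norm_num)

lemma sqrt_le_omegaK_rpow (k : ℝ) : √k ≤ omegaK k ^ ((1 : ℝ) / 2) := by
  rw [← Real.sqrt_eq_rpow, omegaK]
  refine Real.sqrt_le_sqrt (Real.le_sqrt_of_sq_le ?_)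
  nlinarith

lemma norm_modeV'_le (m R : ℝ) {t k : ℝ} (ht : 0 < t) (hk : 0 < k)
    (hH : DifferentiableAt ℝ (hankel1 (modeNu m R)) (k * t)) :
    ‖modeV' m R t k‖ ≤ √t * (3 / 2 * ‖hankel1 (modeNu m R) (k * t)‖ +
      k * t * ‖deriv (hankel1 (modeNu m R)) (k * t)‖) := by
  have hexp : Real.exp (-(modeMu m R * Real.pi / 2)) ≤ 1 := by
    have : 0 ≤ modeMu m R * Real.pi := mul_nonneg (Real.sqrt_nonneg _) Real.pi_pos.le
    exact Real.exp_le_one_iff.2 (by linarith)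
  rw [modeV'_eq m R ht k hH, norm_mul, Complex.norm_real, Real.norm_of_nonneg (by positivity)]
  calc Real.exp (-(modeMu m R * Real.pi / 2)) * √t * _ ≤ 1 * √t * _ := by gcongr
    _ ≤ √t * (3 / 2 * ‖hankel1 (modeNu m R) (k * t)‖ +
          k * t * ‖deriv (hankel1 (modeNu m R)) (k * t)‖) := by
      rw [one_mul]
      refine mul_le_mul_of_nonneg_left ((norm_add_le _ _).trans_eq ?_) (Real.sqrt_nonneg t)
      rw [norm_mul, norm_mul, Complex.norm_real, Real.norm_of_nonneg (by positivity)]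
      norm_num

theorem mode_function_deriv_bound_general (m R : ℝ) :
    ∃ C : ℝ, 0 < C ∧ ∀ t : ℝ, 1 ≤ t → ∀ k : ℝ, 0 < k →
      ‖modeV' m R t k‖ ≤ C * t * omegaK k ^ ((1 : ℝ) / 2) := by
  obtain ⟨C, hC⟩ := exists_norm_hankel1_le (modeMu m R)
  rw [show I * (modeMu m R : ℂ) = modeNu m R from rfl] at hC
  have hC0 : 0 ≤ C := (norm_nonneg _).trans (hC 1 one_pos).1
  refine ⟨7 / 2 * C + 1, by positivity, fun t ht k hk => ?_⟩
  have ht0 : 0 < t := by linarith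
  obtain ⟨hH, hH'⟩ := hC (k * t) (by positivity)
  rw [Real.sqrt_mul hk.le] at hH'
  have hst : √t ≤ t := by nlinarith [Real.mul_self_sqrt ht0.le, Real.one_le_sqrt.2 ht]
  have hω : 5 / 2 + √k ≤ 7 / 2 * omegaK k ^ ((1 : ℝ) / 2) := by
    linarith [one_le_omegaK_rpow k, sqrt_le_omegaK_rpow k]
  calc ‖modeV' m R t k‖
      ≤ √t * (3 / 2 * ‖hankel1 (modeNu m R) (k * t)‖ +
          k * t * ‖deriv (hankel1 (modeNu m R)) (k * t)‖) :=
        norm_modeV'_le m R ht0 hk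
          (hasDerivAt_hankel1 (by simp [modeNu]) (by positivity)).differentiableAt
    _ ≤ √t * (3 / 2 * C + C * (1 + √k * √t)) :=
        mul_le_mul_of_nonneg_left (by linarith) (Real.sqrt_nonneg t)
    _ = C * (5 / 2 * √t + √k * t) := by linear_combination C * √k * Real.mul_self_sqrt ht0.le
    _ ≤ C * t * (5 / 2 + √k) := by nlinarith
    _ ≤ C * t * (7 / 2 * omegaK k ^ ((1 : ℝ) / 2)) := by gcongr
    _ ≤ (7 / 2 * C + 1) * t * omegaK k ^ ((1 : ℝ) / 2) := by nlinarith [one_le_omegaK_rpow k]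

/-- `|∂v/∂t(t,k)| ≤ C·t·ω(k)^{1/2}` for `t ≥ 1`, `k > 0`. -/
theorem mode_function_deriv_bound (m R : ℝ) (hm : 0 < m) (hR : 0 < R) (hmR : 3 / 2 < m * R) :
    ∃ C : ℝ, 0 < C ∧ ∀ t : ℝ, 1 ≤ t → ∀ k : ℝ, 0 < k →
      ‖modeV' m R t k‖ ≤ C * t * omegaK k ^ ((1 : ℝ) / 2) :=
  mode_function_deriv_bound_general m R
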